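/- Fix a nonzero real number c and let T be the two-sided Jacobi matrix with ω n = 1/2 and α n = c·n for all n ∈ ℤ, i.e. T e_n = (e_{n+1} + e_{n−1})/√2 + c·n·e_n. Then for every natural number m, ⟨T^m e_0, e_0⟩ = Σ_{n∈ℤ} (c·n)^m |a_n(c)|². -/

import Mathlib

/-- The two-sided Jacobi matrix of sequences `(ω, α)` indexed by `ℤ`, acting on finitely
supported real sequences: `X e_n = √(ω n)·e_{n+1} + α n·e_n + √(ω (n-1))·e_{n-1}`. -/
noncomputable def jacobiOpZ (ω α : ℤ → ℝ) : (ℤ →₀ ℝ) →ₗ[ℝ] (ℤ →₀ ℝ) :=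
  Finsupp.lsum ℝ fun n => LinearMap.toSpanSingleton ℝ (ℤ →₀ ℝ)
    (Real.sqrt (ω n) • Finsupp.single (n + 1) 1 + α n • Finsupp.single n 1 +
      Real.sqrt (ω (n - 1)) • Finsupp.single (n - 1) 1)

/-- `a_n(c)`, the `n`-th Fourier coefficient of `t ↦ exp(i·√2·sin t / c)`. -/
noncomputable def arcsineFourierCoeff (c : ℝ) (n : ℤ) : ℂ :=
  (1 / (2 * Real.pi)) * ∫ t in (0 : ℝ)..(2 * Real.pi),
    Complex.exp (Complex.I * ((Real.sqrt 2 * Real.sin t / c : ℝ) : ℂ)) *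
      Complex.exp (-(Complex.I * (n : ℂ) * (t : ℂ)))

/-!
The vectors `v_n = (a_{k-n}(c))_{k ∈ ℤ}` are orthonormal in `ℓ²(ℤ)`: by Parseval,
`∑_k conj(a_k) a_{k-n} = (1/2π) ∫ e^{int} |exp(i√2 sin t / c)|² dt = δ_{n0}`.
The coefficients `a_n(c) = J_n(√2 / c)` are Bessel coefficients, so they satisfy the three-term
recurrence `c n a_n = (a_{n-1} + a_{n+1}) / √2`; it says that multiplication by `c k` acts on the
`v_n` exactly as the Jacobi matrix acts on the `e_n`. Hence, by induction on `m`,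
`⟨T^m e_0, e_n⟩ = ∑_k (c k)^m conj(a_k) a_{k-n}`, and `n = 0` is the claim.
-/

open Complex Real MeasureTheory AddCircle
open scoped ComplexConjugate

theorem jacobiOpZ_apply (ω α : ℤ → ℝ) (f : ℤ →₀ ℝ) (n : ℤ) :
    jacobiOpZ ω α f n = √(ω (n - 1)) * f (n - 1) + α n * f n + √(ω n) * f (n + 1) := by
  induction f using Finsupp.induction_linear with
  | zero => simp
  | add f g hf hg => simp only [map_add, Finsupp.add_apply, hf, hg]; ring
  | single j b =>
    simp only [jacobiOpZ, Finsupp.lsum_single, LinearMap.toSpanSingleton_apply, Finsupp.smul_apply,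
      Finsupp.add_apply, Finsupp.single_apply, smul_eq_mul]
    split_ifs <;> first | omega | (subst_vars; ring_nf)

section Parseval

variable {T : ℝ} [Fact (0 < T)]

theorem hasSum_conj_fourierCoeff_mul_fourierCoeff (f g : C(AddCircle T, ℂ)) :
    HasSum (fun i => conj (fourierCoeff f i) * fourierCoeff g i)
      (∫ t, g t * conj (f t) ∂haarAddCircle) := by
  have h := fourierBasis.hasSum_inner_mul_inner (ContinuousMap.toLp 2 haarAddCircle ℂ f)
    (ContinuousMap.toLp 2 haarAddCircle ℂ g)
  simpa only [← inner_conj_symm _ (fourierBasis _), ← HilbertBasis.repr_apply_apply,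
    fourierBasis_repr, fourierCoeff_toLp, ContinuousMap.inner_toLp] using h

theorem fourierCoeff_fourier_mul (f : AddCircle T → ℂ) (n i : ℤ) :
    fourierCoeff (fun t => fourier n t * f t) i = fourierCoeff f (i - n) := by
  simp only [fourierCoeff, smul_eq_mul, ← mul_assoc, ← fourier_add, neg_sub, neg_add_eq_sub]

theorem integral_fourier (n : ℤ) :
    ∫ t, fourier n t ∂(haarAddCircle : Measure (AddCircle T)) = if n = 0 then 1 else 0 := by
  have h := congr_fun (fourierCoeff_fourier (T := T) n) 0
  simpa [fourierCoeff, Pi.single_apply, eq_comm] using h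

theorem hasSum_conj_fourierCoeff_mul_fourierCoeff_sub {G : C(AddCircle T, ℂ)}
    (hG : ∀ t, ‖G t‖ = 1) (n : ℤ) :
    HasSum (fun i => conj (fourierCoeff G i) * fourierCoeff G (i - n))
      (if n = 0 then 1 else 0) := by
  have h := hasSum_conj_fourierCoeff_mul_fourierCoeff G (fourier n * G)
  simp only [ContinuousMap.coe_mul, Pi.mul_def, fourierCoeff_fourier_mul] at h
  convert h using 1
  rw [← integral_fourier (T := T)]
  congr 1 with t
  rw [mul_assoc, mul_conj, normSq_eq_norm_sq, hG, one_pow, ofReal_one, mul_one]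

end Parseval

noncomputable def besselIntegrand (x : ℝ) (n : ℤ) (t : ℝ) : ℂ :=
  exp (I * ((x * Real.sin t : ℝ) : ℂ)) * exp (-(I * n * t))

noncomputable def besselJ (x : ℝ) (n : ℤ) : ℂ :=
  (1 / (2 * π)) * ∫ t in (0 : ℝ)..(2 * π), besselIntegrand x n t

namespace besselIntegrand

variable (x : ℝ) (n : ℤ)

@[fun_prop]
theorem continuous : Continuous (besselIntegrand x n) := by
  unfold besselIntegrand; fun_prop

theorem hasDerivAt (t : ℝ) :
    HasDerivAt (besselIntegrand x n) (I * ((x * Real.cos t - n) * besselIntegrand x n t)) t := by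
  have hsin : HasDerivAt (fun t : ℝ => I * ((x * Real.sin t : ℝ) : ℂ))
      (I * (x * Real.cos t : ℝ)) t :=
    ((Real.hasDerivAt_sin t).const_mul x).ofReal_comp.const_mul I
  have hlin : HasDerivAt (fun t : ℝ => -(I * n * t)) (-(I * n * 1)) t :=
    (ofRealCLM.hasDerivAt.const_mul (I * n)).neg
  refine (hsin.cexp.mul hlin.cexp).congr_deriv ?_
  simp only [besselIntegrand]; push_cast; ring

theorem periodic : Function.Periodic (besselIntegrand x n) (2 * π) := by
  intro t
  simp only [besselIntegrand, Real.sin_add_two_pi]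
  congr 1
  rw [show -(I * n * ((t + 2 * π : ℝ) : ℂ)) = -(I * n * t) + (-n : ℤ) * (2 * π * I) by
    push_cast; ring, Complex.exp_add, exp_int_mul_two_pi_mul_I, mul_one]

theorem two_cos_mul (t : ℝ) :
    2 * Real.cos t * besselIntegrand x n t =
      besselIntegrand x (n - 1) t + besselIntegrand x (n + 1) t := by
  simp only [besselIntegrand, ofReal_cos, two_cos, Int.cast_sub, Int.cast_add, Int.cast_one]
  rw [show -(I * (n - 1) * t) = -(I * n * t) + t * I by ring,
    show -(I * (n + 1) * t) = -(I * n * t) + -t * I by ring, Complex.exp_add, Complex.exp_add]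
  ring

end besselIntegrand

theorem besselJ_sub_one_add_besselJ_add_one (x : ℝ) (n : ℤ) :
    x * (besselJ x (n - 1) + besselJ x (n + 1)) = 2 * n * besselJ x n := by
  have hint : ∀ k, IntervalIntegrable (besselIntegrand x k) volume 0 (2 * π) :=
    fun k => (besselIntegrand.continuous x k).intervalIntegrable _ _
  -- the derivative of a `2π`-periodic function has mean zero
  have hFTC : ∫ t in (0 : ℝ)..(2 * π), I * ((x * Real.cos t - n) * besselIntegrand x n t) = 0 := by
    rw [intervalIntegral.integral_eq_sub_of_hasDerivAt
      (fun t _ => besselIntegrand.hasDerivAt x n t)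
      (by apply Continuous.intervalIntegrable; fun_prop),
      ← zero_add (2 * π), (besselIntegrand.periodic x n) 0, sub_self]
  have hmean : ∫ t in (0 : ℝ)..(2 * π), (x * Real.cos t - n) * besselIntegrand x n t = 0 := by
    simpa [intervalIntegral.integral_const_mul, I_ne_zero] using hFTC
  have hsplit : ∫ t in (0 : ℝ)..(2 * π), (x * Real.cos t - n) * besselIntegrand x n t =
      x / 2 * ((∫ t in (0 : ℝ)..(2 * π), besselIntegrand x (n - 1) t) +
        ∫ t in (0 : ℝ)..(2 * π), besselIntegrand x (n + 1) t) -
      n * ∫ t in (0 : ℝ)..(2 * π), besselIntegrand x n t := by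
    rw [← intervalIntegral.integral_add (hint _) (hint _), ← intervalIntegral.integral_const_mul,
      ← intervalIntegral.integral_const_mul, ← intervalIntegral.integral_sub
        (((hint _).add (hint _)).const_mul _) ((hint _).const_mul _)]
    congr 1 with t
    rw [← besselIntegrand.two_cos_mul]; ring
  simp only [besselJ]
  linear_combination (1 / π) * (hsplit.symm.trans hmean)

instance : Fact (0 < 2 * π) := ⟨two_pi_pos⟩

noncomputable def expISin (x : ℝ) : C(AddCircle (2 * π), ℂ) :=
  ⟨fun θ => exp (I * ((x * Real.Angle.sin θ : ℝ) : ℂ)), by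
    have := Real.Angle.continuous_sin; fun_prop⟩

theorem norm_expISin (x : ℝ) (θ : AddCircle (2 * π)) : ‖expISin x θ‖ = 1 := by
  simp [expISin, norm_exp]

theorem besselJ_eq_fourierCoeff (x : ℝ) (n : ℤ) : besselJ x n = fourierCoeff (expISin x) n := by
  rw [fourierCoeff_eq_intervalIntegral _ n 0, zero_add, besselJ, real_smul]
  push_cast
  congr 1
  refine intervalIntegral.integral_congr fun t _ => ?_
  rw [fourier_coe_apply, smul_eq_mul, besselIntegrand, mul_comm]
  simp only [expISin, ContinuousMap.coe_mk]
  congr 2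
  field_simp
  push_cast
  ring

theorem hasSum_conj_besselJ_mul_besselJ_sub (x : ℝ) (n : ℤ) :
    HasSum (fun k => conj (besselJ x k) * besselJ x (k - n)) (if n = 0 then 1 else 0) := by
  simp only [besselJ_eq_fourierCoeff]
  exact hasSum_conj_fourierCoeff_mul_fourierCoeff_sub (norm_expISin x) n

section ArcsineLaw

variable {c : ℝ}

theorem arcsineFourierCoeff_eq_besselJ (n : ℤ) :
    arcsineFourierCoeff c n = besselJ (√2 / c) n := by
  simp only [arcsineFourierCoeff, besselJ, besselIntegrand, mul_div_right_comm]

theorem arcsineFourierCoeff_recurrence (hc : c ≠ 0) (n : ℤ) :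
    (c * n : ℂ) * arcsineFourierCoeff c n =
      √(1 / 2) * (arcsineFourierCoeff c (n - 1) + arcsineFourierCoeff c (n + 1)) := by
  have hsqrt : (√2 / c : ℝ) * c = 2 * √(1 / 2) := by
    rw [div_mul_cancel₀ _ hc, ← Real.sqrt_sq zero_le_two, ← Real.sqrt_mul (sq_nonneg 2)]
    norm_num
  have hsqrtC : ((√2 / c : ℝ) : ℂ) * c = 2 * √(1 / 2) := mod_cast hsqrt
  have hrec := besselJ_sub_one_add_besselJ_add_one (√2 / c) n
  simp only [arcsineFourierCoeff_eq_besselJ]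
  linear_combination (-c / 2 : ℂ) * hrec +
    (besselJ (√2 / c) (n - 1) + besselJ (√2 / c) (n + 1)) / 2 * hsqrtC

theorem hasSum_jacobiOpZ_pow_single_apply (hc : c ≠ 0) (m : ℕ) (n : ℤ) :
    HasSum (fun k : ℤ => ((c * k : ℝ) : ℂ) ^ m *
        (conj (arcsineFourierCoeff c k) * arcsineFourierCoeff c (k - n)))
      ((jacobiOpZ (fun _ => 1 / 2) (fun k => c * k) ^ m) (Finsupp.single 0 1) n) := by
  induction m generalizing n with
  | zero =>
    convert hasSum_conj_besselJ_mul_besselJ_sub (√2 / c) n using 1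
    · simp [arcsineFourierCoeff_eq_besselJ]
    · simp [Finsupp.single_apply, eq_comm, apply_ite ofReal]
  | succ m ih =>
    rw [pow_succ', Module.End.mul_apply, jacobiOpZ_apply]
    push_cast
    refine ((((ih (n - 1)).mul_left _).add ((ih n).mul_left _)).add
      ((ih (n + 1)).mul_left _)).congr_fun fun k => ?_
    have hrec := arcsineFourierCoeff_recurrence hc (k - n)
    rw [show k - n - 1 = k - (n + 1) by ring, show k - n + 1 = k - (n - 1) by ring] at hrec
    push_cast at hrec ⊢
    linear_combination ((c * k : ℂ) ^ m * conj (arcsineFourierCoeff c k)) * hrec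

end ArcsineLaw

theorem twoSided_jacobi_moments_discrete_arcsine (c : ℝ) (hc : c ≠ 0) (m : ℕ) :
    ((jacobiOpZ (fun _ => 1 / 2) (fun n => c * n) ^ m) (Finsupp.single (0 : ℤ) 1)) 0 =
      ∑' n : ℤ, (c * (n : ℝ)) ^ m * ‖arcsineFourierCoeff c n‖ ^ 2 := by
  refine (Complex.hasSum_ofReal.mp ?_).tsum_eq.symm
  simpa [conj_mul'] using hasSum_jacobiOpZ_pow_single_apply hc m 0
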